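/- arXiv:0910.5259 — 4 statements merged into one kernel-verified Lean document; each statement's English description precedes it below -/
import Mathlib

section
/- Let G be a group equipped with a linear (total) order that is translation invariant on both sides, i.e., for all a, g, h in G, g < h implies g·a < h·a and a·g < a·h. Then every unit of the integral group ring ℤ[G] is trivial: if p is a unit of ℤ[G], then there exists g ∈ G such that p = g or p = −g (that is, p is a single monomial with coefficient 1 or −1). -/
/-!
A left-invariant linear order on a group gives it the two-unique-products property: for finite
sets `A`, `B` with `#A * #B > 1`, the maximum and the minimum of `A * B` are each reached by
exactly one pair, and these pairs differ. If `f * g = 1` in `R[G]` with `R` a domain and `f` or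
`g` had two terms, both unique pairs of their supports would contribute a nonzero coefficient to
`f * g`, so both products would equal `1`, contradicting uniqueness. Hence units are monomials.
-/

open Finset

namespace MonoidAlgebra

variable {R A : Type*} [Semiring R] [NoZeroDivisors R]

theorem card_support_mul_card_support_le_one_of_mul_eq_single [Mul A] [TwoUniqueProds A]
    {f g : R[A]} {a : A} {r : R} (h : f * g = single a r) :
    #f.coeff.support * #g.coeff.support ≤ 1 := by
  by_contra! hcard
  obtain ⟨p₁, hp₁, p₂, hp₂, hne, hu₁, hu₂⟩ := TwoUniqueProds.uniqueMul_of_one_lt_card hcard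
  have mul_eq : ∀ p ∈ f.coeff.support ×ˢ g.coeff.support,
      UniqueMul f.coeff.support g.coeff.support p.1 p.2 → p.1 * p.2 = a := by
    intro p hp hu
    rw [mem_product, Finsupp.mem_support_iff, Finsupp.mem_support_iff] at hp
    have hcoeff : (f * g).coeff (p.1 * p.2) ≠ 0 :=
      coeff_mul_mul_of_uniqueMul hu ▸ mul_ne_zero hp.1 hp.2
    rw [h, coeff_single] at hcoeff
    exact by_contra fun hpa ↦ hcoeff (Finsupp.single_eq_of_ne hpa)
  rw [mem_product] at hp₂
  have := hu₁ hp₂.1 hp₂.2 ((mul_eq p₂ (mem_product.mpr hp₂) hu₂).trans (mul_eq p₁ hp₁ hu₁).symm)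
  exact hne (Prod.ext this.1 this.2).symm

theorem card_support_eq_one_of_mul_eq_one [Nontrivial R] [Monoid A] [TwoUniqueProds A]
    {f g : R[A]} (h : f * g = 1) : #f.coeff.support = 1 ∧ #g.coeff.support = 1 := by
  have hf : #f.coeff.support ≠ 0 := by
    rw [Ne, Finsupp.card_support_eq_zero, coeff_eq_zero]
    rintro rfl
    simp at h
  have hg : #g.coeff.support ≠ 0 := by
    rw [Ne, Finsupp.card_support_eq_zero, coeff_eq_zero]
    rintro rfl
    simp at h
  exact mul_eq_one.mp <| le_antisymm (card_support_mul_card_support_le_one_of_mul_eq_single h)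
    (Nat.one_le_iff_ne_zero.mpr (mul_ne_zero hf hg))

theorem exists_single_of_isUnit [Nontrivial R] [Monoid A] [TwoUniqueProds A] {f : R[A]}
    (hf : IsUnit f) : ∃ a : A, ∃ r : R, IsUnit r ∧ f = single a r := by
  obtain ⟨⟨f, g, hfg, hgf⟩, rfl⟩ := hf
  obtain ⟨a, r, -, rfl⟩ : ∃ a r, r ≠ 0 ∧ f = single a r := by
    simpa [← coeff_inj] using
      Finsupp.card_support_eq_one'.mp (card_support_eq_one_of_mul_eq_one hfg).1
  obtain ⟨b, s, -, rfl⟩ : ∃ b s, s ≠ 0 ∧ g = single b s := by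
    simpa [← coeff_inj] using
      Finsupp.card_support_eq_one'.mp (card_support_eq_one_of_mul_eq_one hfg).2
  obtain ⟨-, hrs⟩ : a * b = 1 ∧ r * s = 1 := by
    simpa [one_def, single_mul_single, single_inj] using hfg
  obtain ⟨-, hsr⟩ : b * a = 1 ∧ s * r = 1 := by
    simpa [one_def, single_mul_single, single_inj] using hgf
  exact ⟨a, r, ⟨⟨r, s, hrs, hsr⟩, rfl⟩, rfl⟩

end MonoidAlgebra

theorem units_of_ordered_group_ring_are_trivial_general
    {G : Type*} [Group G] [LinearOrder G]
    (hmul_left : ∀ a g h : G, g < h → a * g < a * h)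
    (p : (MonoidAlgebra ℤ G)ˣ) :
    ∃ g : G, (p : MonoidAlgebra ℤ G) = MonoidAlgebra.single g 1 ∨
      (p : MonoidAlgebra ℤ G) = MonoidAlgebra.single g (-1) := by
  -- yields `TwoUniqueProds G` through the instance `TwoUniqueProds.of_covariant_right`
  have : MulLeftStrictMono G := ⟨fun a _ _ ↦ hmul_left a _ _⟩
  obtain ⟨g, r, hr, hp⟩ := MonoidAlgebra.exists_single_of_isUnit p.isUnit
  rcases Int.isUnit_iff.mp hr with rfl | rfl
  exacts [⟨g, .inl hp⟩, ⟨g, .inr hp⟩]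

/-- Every unit of the integral group ring `ℤ[G]` of a (bi-)ordered group `G`
is trivial, i.e. of the form `± g` for a single group element `g`. -/
theorem units_of_ordered_group_ring_are_trivial
    {G : Type*} [Group G] [LinearOrder G]
    (hmul_right : ∀ a g h : G, g < h → g * a < h * a)
    (hmul_left : ∀ a g h : G, g < h → a * g < a * h)
    (p : (MonoidAlgebra ℤ G)ˣ) :
    ∃ g : G, (p : MonoidAlgebra ℤ G) = MonoidAlgebra.single g 1 ∨
      (p : MonoidAlgebra ℤ G) = MonoidAlgebra.single g (-1) :=
  units_of_ordered_group_ring_are_trivial_general hmul_left p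
end

section
/- Fix a natural number k. Every unit of the group ring ℤ[ℤ^k] of the free abelian group ℤ^k is a signed monomial: if p is a unit of AddMonoidAlgebra ℤ (Fin k → ℤ), then there exists v ∈ ℤ^k such that p = single v 1 or p = single v (−1). -/
/-!
`ℤ^k` has two unique sums (any linearly ordered cancellative group does): for finite nonempty
`A, B` not both singletons there are two distinct pairs `(a, b) ∈ A × B` each of which is the only
way to write `a + b` as a sum from `A + B`. Take `A, B` the supports of `p` and `q` with `p q = 1`.
The coefficient of `p q` at such an `a + b` is a product of two nonzero integers, so `a + b = 0`
for both pairs, contradicting uniqueness. Hence `p` and `q` are monomials `c X^a`, `d X^b`, and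
`c d = 1` forces `c = ±1`.
-/

open Finset

namespace AddMonoidAlgebra

variable {R A : Type*} [Semiring R] [AddMonoid A]

theorem add_eq_zero_of_uniqueAdd_of_mul_eq_one [NoZeroDivisors R] {p q : AddMonoidAlgebra R A}
    (h : p * q = 1) {a b : A} (ha : a ∈ p.coeff.support) (hb : b ∈ q.coeff.support)
    (hu : UniqueAdd p.coeff.support q.coeff.support a b) : a + b = 0 := by
  by_contra hne
  have hcoeff : (p * q).coeff (a + b) = p.coeff a * q.coeff b := coeff_mul_add_of_uniqueAdd hu
  rw [h, one_def, coeff_single, Finsupp.single_eq_of_ne hne] at hcoeff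
  exact mul_ne_zero (Finsupp.mem_support_iff.mp ha) (Finsupp.mem_support_iff.mp hb) hcoeff.symm

theorem card_support_mul_card_support_le_one_of_mul_eq_one [NoZeroDivisors R] [TwoUniqueSums A]
    {p q : AddMonoidAlgebra R A} (h : p * q = 1) :
    #p.coeff.support * #q.coeff.support ≤ 1 := by
  by_contra! hcard
  obtain ⟨⟨a₁, b₁⟩, h₁, ⟨a₂, b₂⟩, h₂, hne, hu₁, hu₂⟩ :=
    TwoUniqueSums.uniqueAdd_of_one_lt_card hcard
  rw [mem_product] at h₁ h₂
  have hsum : a₂ + b₂ = a₁ + b₁ := by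
    rw [add_eq_zero_of_uniqueAdd_of_mul_eq_one h h₁.1 h₁.2 hu₁,
      add_eq_zero_of_uniqueAdd_of_mul_eq_one h h₂.1 h₂.2 hu₂]
  obtain ⟨rfl, rfl⟩ := hu₁ h₂.1 h₂.2 hsum
  exact hne rfl

theorem exists_eq_single_of_mul_eq_one [NoZeroDivisors R] [Nontrivial R] [TwoUniqueSums A]
    {p q : AddMonoidAlgebra R A} (h : p * q = 1) :
    ∃ a c b d, p = single a c ∧ q = single b d := by
  have hp : p.coeff.support.Nonempty := by
    rw [Finsupp.support_nonempty_iff, coeff_eq_zero.ne]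
    rintro rfl
    simp at h
  have hq : q.coeff.support.Nonempty := by
    rw [Finsupp.support_nonempty_iff, coeff_eq_zero.ne]
    rintro rfl
    simp at h
  have hcard := card_support_mul_card_support_le_one_of_mul_eq_one h
  obtain ⟨a, c, hpc⟩ := Finsupp.card_support_le_one'.mp
    (le_of_mul_le_of_one_le_left hcard (card_pos.mpr hq))
  obtain ⟨b, d, hqd⟩ := Finsupp.card_support_le_one'.mp
    (le_of_mul_le_of_one_le_right hcard (card_pos.mpr hp))
  exact ⟨a, c, b, d, coeff_injective hpc, coeff_injective hqd⟩

theorem mul_eq_one_of_single_mul_single_eq_one [Nontrivial R] {a b : A} {c d : R}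
    (h : single a c * single b d = 1) : c * d = 1 := by
  rw [single_mul_single, one_def, single_inj] at h
  rcases h with ⟨-, hcd⟩ | ⟨-, h10⟩
  exacts [hcd, absurd h10 one_ne_zero]

theorem exists_eq_single_of_isUnit [NoZeroDivisors R] [Nontrivial R] [TwoUniqueSums A]
    {p : AddMonoidAlgebra R A} (hp : IsUnit p) : ∃ a c, IsUnit c ∧ p = single a c := by
  obtain ⟨u, rfl⟩ := hp
  obtain ⟨a, c, b, d, hp, hq⟩ := exists_eq_single_of_mul_eq_one u.mul_inv
  have hcd := mul_eq_one_of_single_mul_single_eq_one (hp ▸ hq ▸ u.mul_inv)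
  have hdc := mul_eq_one_of_single_mul_single_eq_one (hq ▸ hp ▸ u.inv_mul)
  exact ⟨a, c, ⟨⟨c, d, hcd, hdc⟩, rfl⟩, hp⟩

end AddMonoidAlgebra

/-- Every unit of the group ring `ℤ[ℤ^k]` is a signed monomial. -/
theorem units_of_free_abelian_group_ring_are_trivial (k : ℕ)
    (p : (AddMonoidAlgebra ℤ (Fin k → ℤ))ˣ) :
    ∃ v : Fin k → ℤ, (p : AddMonoidAlgebra ℤ (Fin k → ℤ)) = AddMonoidAlgebra.single v 1 ∨
      (p : AddMonoidAlgebra ℤ (Fin k → ℤ)) = AddMonoidAlgebra.single v (-1) := by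
  obtain ⟨v, c, hc, hp⟩ := AddMonoidAlgebra.exists_eq_single_of_isUnit p.isUnit
  refine ⟨v, ?_⟩
  rcases Int.isUnit_iff.mp hc with rfl | rfl
  exacts [Or.inl hp, Or.inr hp]
end

section
/- Let R be the commutative ring ℤ[x₁, x₂, t] modulo the ideal generated by x₁³ − 2·x₁·x₂ and x₁²·x₂ − x₂² − t⁴. Then for every s in the set {1, x₂, x₁² − x₂, x₂²} ⊆ R and every ε ∈ {1, −1}, there exists a natural number k ≤ 2 such that (ε·s)⁴ = t^(8k). (Explicitly: 1⁴ = 1, x₂⁴ = t⁸, (x₁² − x₂)⁴ = t⁸, and (x₂²)⁴ = t¹⁶.) Consequently the fourth power of every possible Seidel element of G(2,4) is the fundamental class times a power of the Novikov variable. -/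
open MvPolynomial

/-!
Multiplying `x₁³ = 2x₁x₂` by `x₁` gives `x₁⁴ = 2x₁²x₂`, hence `(x₁² - x₂)² = x₂²`, and
multiplying `x₁²x₂ = x₂² + t⁴` by `x₁²` then gives `x₁²x₂² = t⁴x₁²`. Substituting these into
`x₂⁴ = x₂² (x₁²x₂ - t⁴)` yields `x₂⁴ = t⁸`, and all four fourth powers follow; the sign `ε`
disappears because `ε⁴ = 1`.
-/

namespace G24

variable {R : Type*} [CommRing R] {x₁ x₂ t : R}

theorem sq_sub_sq_eq_sq (h₁ : x₁ ^ 3 = 2 * x₁ * x₂) : (x₁ ^ 2 - x₂) ^ 2 = x₂ ^ 2 := by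
  linear_combination x₁ * h₁

theorem sq_mul_sq_eq (h₁ : x₁ ^ 3 = 2 * x₁ * x₂) (h₂ : x₁ ^ 2 * x₂ = x₂ ^ 2 + t ^ 4) :
    x₁ ^ 2 * x₂ ^ 2 = t ^ 4 * x₁ ^ 2 := by
  linear_combination x₁ ^ 2 * h₂ - x₁ * x₂ * h₁

theorem pow_four_eq_pow_eight (h₁ : x₁ ^ 3 = 2 * x₁ * x₂)
    (h₂ : x₁ ^ 2 * x₂ = x₂ ^ 2 + t ^ 4) : x₂ ^ 4 = t ^ 8 := by
  linear_combination x₂ * sq_mul_sq_eq h₁ h₂ - (x₂ ^ 2 - t ^ 4) * h₂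

theorem sq_sub_pow_four_eq_pow_eight (h₁ : x₁ ^ 3 = 2 * x₁ * x₂)
    (h₂ : x₁ ^ 2 * x₂ = x₂ ^ 2 + t ^ 4) : (x₁ ^ 2 - x₂) ^ 4 = t ^ 8 := by
  rw [show 4 = 2 * 2 from rfl, pow_mul, sq_sub_sq_eq_sq h₁, ← pow_mul]
  exact pow_four_eq_pow_eight h₁ h₂

theorem sq_pow_four_eq_pow_sixteen (h₁ : x₁ ^ 3 = 2 * x₁ * x₂)
    (h₂ : x₁ ^ 2 * x₂ = x₂ ^ 2 + t ^ 4) : (x₂ ^ 2) ^ 4 = t ^ 16 := by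
  rw [← pow_mul, mul_comm, pow_mul, pow_four_eq_pow_eight h₁ h₂, ← pow_mul]

end G24

theorem zsmul_pow_four_of_mem_one_neg_one {R : Type*} [Ring R] {ε : ℤ}
    (hε : ε ∈ ({1, -1} : Set ℤ)) (s : R) : (ε • s) ^ 4 = s ^ 4 := by
  rcases hε with rfl | rfl
  · rw [one_smul]
  · rw [neg_smul, one_smul, Even.neg_pow ⟨2, rfl⟩]

theorem Ideal.Quotient.mk_pair_left {A : Type*} [CommRing A] (p q : A) :
    Ideal.Quotient.mk (Ideal.span {p, q}) p = 0 :=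
  Ideal.Quotient.eq_zero_iff_mem.2 (Ideal.subset_span (Set.mem_insert _ _))

theorem Ideal.Quotient.mk_pair_right {A : Type*} [CommRing A] (p q : A) :
    Ideal.Quotient.mk (Ideal.span {p, q}) q = 0 :=
  Ideal.Quotient.eq_zero_iff_mem.2 (Ideal.subset_span (Set.mem_insert_of_mem _ rfl))

/-- In the quantum homology ring of `G(2,4)`,
`R = ℤ[x₁, x₂, t] / (x₁³ - 2x₁x₂, x₁²x₂ - x₂² - t⁴)`, the fourth power of each
possible Seidel element `±1, ±x₂, ±(x₁² - x₂), ±x₂²` is `t^(8k)` for some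
`k ≤ 2`. -/
theorem g24_seidel_fourth_powers (x₁ x₂ t :
      MvPolynomial (Fin 3) ℤ ⧸
        Ideal.span {(X 0 : MvPolynomial (Fin 3) ℤ) ^ 3 - 2 * X 0 * X 1,
          (X 0 : MvPolynomial (Fin 3) ℤ) ^ 2 * X 1 - X 1 ^ 2 - X 2 ^ 4})
    (hx₁ : x₁ = Ideal.Quotient.mk _ (X 0))
    (hx₂ : x₂ = Ideal.Quotient.mk _ (X 1))
    (ht : t = Ideal.Quotient.mk _ (X 2)) :
    ∀ s ∈ ({1, x₂, x₁ ^ 2 - x₂, x₂ ^ 2} :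
        Set (MvPolynomial (Fin 3) ℤ ⧸
          Ideal.span {(X 0 : MvPolynomial (Fin 3) ℤ) ^ 3 - 2 * X 0 * X 1,
            (X 0 : MvPolynomial (Fin 3) ℤ) ^ 2 * X 1 - X 1 ^ 2 - X 2 ^ 4})),
      ∀ ε ∈ ({1, -1} : Set ℤ),
        ∃ k : ℕ, k ≤ 2 ∧ ((ε : ℤ) • s) ^ 4 = t ^ (8 * k) := by
  have h₁ : x₁ ^ 3 = 2 * x₁ * x₂ := by
    have := Ideal.Quotient.mk_pair_left (X 0 ^ 3 - 2 * X 0 * X 1 : MvPolynomial (Fin 3) ℤ)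
      (X 0 ^ 2 * X 1 - X 1 ^ 2 - X 2 ^ 4)
    simp only [map_sub, map_mul, map_pow, map_ofNat, ← hx₁, ← hx₂] at this
    linear_combination this
  have h₂ : x₁ ^ 2 * x₂ = x₂ ^ 2 + t ^ 4 := by
    have := Ideal.Quotient.mk_pair_right (X 0 ^ 3 - 2 * X 0 * X 1 : MvPolynomial (Fin 3) ℤ)
      (X 0 ^ 2 * X 1 - X 1 ^ 2 - X 2 ^ 4)
    simp only [map_sub, map_mul, map_pow, ← hx₁, ← hx₂, ← ht] at this
    linear_combination this
  intro s hs ε hε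
  rw [zsmul_pow_four_of_mem_one_neg_one hε]
  rcases hs with rfl | rfl | rfl | rfl
  · exact ⟨0, zero_le_two, by rw [mul_zero, pow_zero, one_pow]⟩
  · exact ⟨1, one_le_two, G24.pow_four_eq_pow_eight h₁ h₂⟩
  · exact ⟨1, one_le_two, G24.sq_sub_pow_four_eq_pow_eight h₁ h₂⟩
  · exact ⟨2, le_rfl, G24.sq_pow_four_eq_pow_sixteen h₁ h₂⟩
end

section
/- Let R be the commutative ring ℤ[x₁, x₂, t] modulo the ideal generated by x₁³ − 2·x₁·x₂ and x₁²·x₂ − x₂² − t⁴. Then for all integers a and b, the element a·b·(x₁²·x₂) is not equal to t⁴ in R. (Consequently no element of the form a·x₁ times an element of the form b·x₁·x₂, with a, b ∈ ℤ, can equal t⁴·𝟙, so no Seidel element of G(2,4) is an integer multiple of x₁.) -/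
/-!
The relations `x₁³ - 2x₁x₂` and `x₁²x₂ - x₂² - t⁴` both vanish at `(x₁, x₂, t) = (0, 1, 1)` over
`𝔽₂`, the second because `x₂² + t⁴ = 2`. Evaluation there is therefore a ring homomorphism
from `R` to `𝔽₂`; it sends every multiple of `x₁²x₂` to `0` and `t⁴` to `1`.
-/

open MvPolynomial

theorem span_g24_relations_le_ker_aeval :
    Ideal.span {(X 0 : MvPolynomial (Fin 3) ℤ) ^ 3 - 2 * X 0 * X 1,
        (X 0 : MvPolynomial (Fin 3) ℤ) ^ 2 * X 1 - X 1 ^ 2 - X 2 ^ 4} ≤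
      RingHom.ker (aeval ![0, 1, 1] : MvPolynomial (Fin 3) ℤ →ₐ[ℤ] ZMod 2) := by
  simp [Ideal.span_le, Set.insert_subset_iff]

theorem g24_no_x1_seidel_general (x₁ x₂ t :
      MvPolynomial (Fin 3) ℤ ⧸
        Ideal.span {(X 0 : MvPolynomial (Fin 3) ℤ) ^ 3 - 2 * X 0 * X 1,
          (X 0 : MvPolynomial (Fin 3) ℤ) ^ 2 * X 1 - X 1 ^ 2 - X 2 ^ 4})
    (hx₁ : x₁ = Ideal.Quotient.mk _ (X 0))
    (ht : t = Ideal.Quotient.mk _ (X 2)) :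
    ∀ a b : ℤ, ((a * b : ℤ) : MvPolynomial (Fin 3) ℤ ⧸
        Ideal.span {(X 0 : MvPolynomial (Fin 3) ℤ) ^ 3 - 2 * X 0 * X 1,
          (X 0 : MvPolynomial (Fin 3) ℤ) ^ 2 * X 1 - X 1 ^ 2 - X 2 ^ 4}) *
        (x₁ ^ 2 * x₂) ≠ t ^ 4 := by
  intro a b h
  have h_mod_two := congrArg (Ideal.Quotient.lift _ _ span_g24_relations_le_ker_aeval) h
  simp [hx₁, ht] at h_mod_two

/-- In the quantum homology ring of `G(2,4)`,
`R = ℤ[x₁, x₂, t] / (x₁³ - 2x₁x₂, x₁²x₂ - x₂² - t⁴)`, no integer multiple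
`a·b·(x₁²·x₂)` equals `t⁴`; hence no Seidel element of `G(2,4)` is an integer
multiple of `x₁`. -/
theorem g24_no_x1_seidel (x₁ x₂ t :
      MvPolynomial (Fin 3) ℤ ⧸
        Ideal.span {(X 0 : MvPolynomial (Fin 3) ℤ) ^ 3 - 2 * X 0 * X 1,
          (X 0 : MvPolynomial (Fin 3) ℤ) ^ 2 * X 1 - X 1 ^ 2 - X 2 ^ 4})
    (hx₁ : x₁ = Ideal.Quotient.mk _ (X 0))
    (hx₂ : x₂ = Ideal.Quotient.mk _ (X 1))
    (ht : t = Ideal.Quotient.mk _ (X 2)) :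
    ∀ a b : ℤ, ((a * b : ℤ) : MvPolynomial (Fin 3) ℤ ⧸
        Ideal.span {(X 0 : MvPolynomial (Fin 3) ℤ) ^ 3 - 2 * X 0 * X 1,
          (X 0 : MvPolynomial (Fin 3) ℤ) ^ 2 * X 1 - X 1 ^ 2 - X 2 ^ 4}) *
        (x₁ ^ 2 * x₂) ≠ t ^ 4 :=
  g24_no_x1_seidel_general x₁ x₂ t hx₁ ht
end
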